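/- arXiv:1806.08005 — 10 statements merged into one kernel-verified Lean document; each statement's English description precedes it below -/
import Mathlib

section
/- Let μ > 0 and σ > 0, and let Φ denote the standard normal cumulative distribution function. Define Ψ(x) = Φ((x−μ)/σ) − Φ((ln x − ln μ)/(σ/μ)) for x > 0. Then sup_{x>0} |Ψ(x)| ≤ (1/√(2π)) · max( (exp(1 − σ²/μ² − √(σ⁴/μ⁴ + 1)) − 2 + σ²/μ² + √(σ⁴/μ⁴ + 1))/(σ/μ), (exp(2σ/μ) − 1 − 2σ/μ)/(σ/μ) ). -/
/-!
Write `y = x / μ` and `s = σ / μ`. Then `√(2π) Ψ(x)` is the Gaussian integral of `e^{-u²/2}` over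
`[log y / s, (y - 1) / s]`, an interval on one side of the origin. Let `c` be the distance from
the origin to its nearer endpoint. If `c ≥ 1 / (2s)`, the bound `e^{-u²/2} ≤ (u / c) e^{-u²/2}`
makes the integral at most `1 / c ≤ 2s`. Otherwise `|log y|` or `1 - y` is at most `1/2`, so the
interval has length `(y - 1 - log y) / s ≤ 2 s c²`, and `c² e^{-c²/2} ≤ 1`. Hence
`|Ψ| ≤ 2s / √(2π)`, and `2s ≤ (e^{2s} - 1 - 2s) / s` since `e^{2s} ≥ 1 + 2s + 2s²`.
-/

open MeasureTheory Real Set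

noncomputable def stdNormalCDF (t : ℝ) : ℝ :=
  (Real.sqrt (2 * Real.pi))⁻¹ * ∫ u in Set.Iic t, Real.exp (-u ^ 2 / 2)

lemma integrable_exp_neg_sq_div_two : Integrable fun u : ℝ => exp (-u ^ 2 / 2) := by
  simpa [neg_div, div_eq_inv_mul] using integrable_exp_neg_mul_sq (by norm_num : (0 : ℝ) < 1 / 2)

lemma stdNormalCDF_sub_stdNormalCDF (a b : ℝ) :
    stdNormalCDF b - stdNormalCDF a = (√(2 * π))⁻¹ * ∫ u in a..b, exp (-u ^ 2 / 2) := by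
  rw [stdNormalCDF, stdNormalCDF, ← mul_sub, intervalIntegral.integral_Iic_sub_Iic
    integrable_exp_neg_sq_div_two.integrableOn integrable_exp_neg_sq_div_two.integrableOn]

lemma sq_mul_exp_neg_sq_div_two_le_one (r : ℝ) : r ^ 2 * exp (-r ^ 2 / 2) ≤ 1 := by
  have h := quadratic_le_exp_of_nonneg (by positivity : 0 ≤ r ^ 2 / 2)
  rw [neg_div, exp_neg, ← div_eq_mul_inv, div_le_one (exp_pos _)]
  nlinarith [sq_nonneg (r ^ 2 / 2 - 1)]

lemma integral_exp_neg_sq_div_two_le_inv {a b : ℝ} (ha : 0 < a) (hab : a ≤ b) :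
    ∫ u in a..b, exp (-u ^ 2 / 2) ≤ a⁻¹ := by
  have hprim : ∀ u ∈ uIcc a b, HasDerivAt (fun u => -exp (-u ^ 2 / 2) / a)
      (a⁻¹ * (u * exp (-u ^ 2 / 2))) u := by
    intro u _
    have h : HasDerivAt (fun u : ℝ => -u ^ 2 / 2) (-u) u :=
      ((hasDerivAt_pow 2 u).neg.div_const 2).congr_deriv (by ring)
    exact (h.exp.neg.div_const a).congr_deriv (by ring)
  calc ∫ u in a..b, exp (-u ^ 2 / 2)
      ≤ ∫ u in a..b, a⁻¹ * (u * exp (-u ^ 2 / 2)) := by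
        refine intervalIntegral.integral_mono_on hab
          integrable_exp_neg_sq_div_two.intervalIntegrable
          (Continuous.intervalIntegrable (by fun_prop) _ _) fun u hu => ?_
        rw [← mul_assoc, le_mul_iff_one_le_left (exp_pos _), le_inv_mul_iff₀ ha, mul_one]
        exact hu.1
    _ = (exp (-a ^ 2 / 2) - exp (-b ^ 2 / 2)) / a := by
        rw [intervalIntegral.integral_eq_sub_of_hasDerivAt hprim
          (Continuous.intervalIntegrable (by fun_prop) _ _)]
        ring
    _ ≤ a⁻¹ := by
        rw [div_eq_mul_inv]
        refine mul_le_of_le_one_left (inv_pos.2 ha).le ?_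
        linarith [exp_pos (-b ^ 2 / 2), exp_le_one_iff.2 (by nlinarith : -a ^ 2 / 2 ≤ 0)]

lemma integral_exp_neg_sq_div_two_le_sub_mul {a b : ℝ} (ha : 0 ≤ a) (hab : a ≤ b) :
    ∫ u in a..b, exp (-u ^ 2 / 2) ≤ (b - a) * exp (-a ^ 2 / 2) := by
  calc ∫ u in a..b, exp (-u ^ 2 / 2)
      ≤ ∫ _ in a..b, exp (-a ^ 2 / 2) :=
        intervalIntegral.integral_mono_on hab
          integrable_exp_neg_sq_div_two.intervalIntegrable intervalIntegrable_const fun u hu =>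
            exp_le_exp.2 (by nlinarith [hu.1])
    _ = (b - a) * exp (-a ^ 2 / 2) := by simp

lemma integral_exp_neg_sq_div_two_le_two_mul {a b s : ℝ} (hs : 0 ≤ s) (ha : 0 ≤ a) (hab : a ≤ b)
    (h : 1 ≤ 2 * s * a ∨ b - a ≤ 2 * s * a ^ 2) : ∫ u in a..b, exp (-u ^ 2 / 2) ≤ 2 * s := by
  rcases h with far | near
  · have ha' : 0 < a := by by_contra! h; nlinarith
    calc _ ≤ a⁻¹ := integral_exp_neg_sq_div_two_le_inv ha' hab
      _ ≤ 2 * s := by rwa [inv_le_iff_one_le_mul₀ ha']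
  · calc _ ≤ (b - a) * exp (-a ^ 2 / 2) := integral_exp_neg_sq_div_two_le_sub_mul ha hab
      _ ≤ 2 * s * (a ^ 2 * exp (-a ^ 2 / 2)) := by
        rw [← mul_assoc]; exact mul_le_mul_of_nonneg_right near (exp_pos _).le
      _ ≤ 2 * s := mul_le_of_le_one_right (by positivity) (sq_mul_exp_neg_sq_div_two_le_one a)

lemma sub_one_sub_log_le_log_sq {y : ℝ} (hy : 0 < y) (h : |log y| ≤ 1) :
    y - 1 - log y ≤ log y ^ 2 := by
  simpa [exp_log hy] using (abs_le.1 (abs_exp_sub_one_sub_id_le h)).2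

lemma sub_one_sub_log_le_two_mul_sq {y : ℝ} (hy : 1 / 2 ≤ y) :
    y - 1 - log y ≤ 2 * (1 - y) ^ 2 := by
  have hy0 : 0 < y := by linarith
  have hlog : -log y ≤ y⁻¹ - 1 := by
    simpa [log_inv] using log_le_sub_one_of_pos (inv_pos.2 hy0)
  have hsq : y - 1 + (y⁻¹ - 1) = (1 - y) ^ 2 / y := by field_simp; ring
  have : (1 - y) ^ 2 / y ≤ 2 * (1 - y) ^ 2 := by
    rw [div_le_iff₀ hy0]; nlinarith [sq_nonneg (1 - y)]
  linarith

lemma integral_exp_neg_sq_div_two_log_div_le {s y : ℝ} (hs : 0 < s) (hy : 0 < y) :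
    ∫ u in log y / s..(y - 1) / s, exp (-u ^ 2 / 2) ≤ 2 * s := by
  have hlen : (y - 1) / s - log y / s = (y - 1 - log y) / s := by ring
  have hlog := log_le_sub_one_of_pos hy
  rcases le_total 1 y with hy1 | hy1
  · have hL := log_nonneg hy1
    refine integral_exp_neg_sq_div_two_le_two_mul hs.le (by positivity) (by gcongr) ?_
    rcases le_or_gt (1 / 2) (log y) with far | near
    · left; field_simp; linarith
    · right
      rw [hlen, div_le_iff₀ hs]
      have := sub_one_sub_log_le_log_sq hy (abs_le.2 ⟨by linarith, by linarith⟩)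
      field_simp
      nlinarith
  · have hreflect := intervalIntegral.integral_comp_neg (a := log y / s) (b := (y - 1) / s)
      fun u => exp (-u ^ 2 / 2)
    simp only [neg_sq] at hreflect
    rw [hreflect]
    refine integral_exp_neg_sq_div_two_le_two_mul hs.le ?_ (by gcongr) ?_
    · rw [neg_nonneg]; exact div_nonpos_of_nonpos_of_nonneg (by linarith) hs.le
    rcases le_or_gt (1 / 2) (1 - y) with far | near
    · left; field_simp; linarith
    · right
      rw [neg_sub_neg, hlen, div_le_iff₀ hs]
      have := sub_one_sub_log_le_two_mul_sq (by linarith : 1 / 2 ≤ y)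
      field_simp
      nlinarith

lemma two_mul_le_exp_two_mul_sub_one_sub_two_mul_div {s : ℝ} (hs : 0 < s) :
    2 * s ≤ (exp (2 * s) - 1 - 2 * s) / s := by
  rw [le_div_iff₀ hs]
  nlinarith [quadratic_le_exp_of_nonneg (by positivity : 0 ≤ 2 * s)]

/-- For μ > 0, σ > 0, the difference
`Ψ(x) = Φ((x−μ)/σ) − Φ((ln x − ln μ)/(σ/μ))` satisfies, for all `x > 0`, the bound
`|Ψ(x)| ≤ (1/√(2π)) · max( (exp(1 − σ²/μ² − √(σ⁴/μ⁴+1)) − 2 + σ²/μ² + √(σ⁴/μ⁴+1))/(σ/μ),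
(exp(2σ/μ) − 1 − 2σ/μ)/(σ/μ) )`, hence the same bound for `sup_{x>0} |Ψ(x)|`. -/
theorem lognormal_approximation_bound (μ σ : ℝ) (hμ : 0 < μ) (hσ : 0 < σ) :
    ∀ x > (0 : ℝ),
      |stdNormalCDF ((x - μ) / σ) - stdNormalCDF ((Real.log x - Real.log μ) / (σ / μ))| ≤
        (Real.sqrt (2 * Real.pi))⁻¹ *
          max
            ((Real.exp (1 - σ ^ 2 / μ ^ 2 - Real.sqrt (σ ^ 4 / μ ^ 4 + 1)) - 2 + σ ^ 2 / μ ^ 2 +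
                Real.sqrt (σ ^ 4 / μ ^ 4 + 1)) / (σ / μ))
            ((Real.exp (2 * σ / μ) - 1 - 2 * σ / μ) / (σ / μ)) := by
  intro x hx
  have hs : 0 < σ / μ := div_pos hσ hμ
  have hy : 0 < x / μ := div_pos hx hμ
  have hlog : (log x - log μ) / (σ / μ) = log (x / μ) / (σ / μ) := by
    rw [log_div hx.ne' hμ.ne']
  have hlin : (x - μ) / σ = (x / μ - 1) / (σ / μ) := by field_simp
  have hle : log (x / μ) / (σ / μ) ≤ (x / μ - 1) / (σ / μ) := by
    gcongr; exact log_le_sub_one_of_pos hy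
  rw [hlog, hlin, stdNormalCDF_sub_stdNormalCDF, abs_of_nonneg (mul_nonneg (by positivity)
    (intervalIntegral.integral_nonneg hle fun u _ => (exp_pos _).le)), mul_div_assoc]
  gcongr
  exact (integral_exp_neg_sq_div_two_log_div_le hs hy).trans <|
    (two_mul_le_exp_two_mul_sub_one_sub_two_mul_div hs).trans (le_max_right _ _)
end

section
/- Let R, V, s be real numbers with R > 0, V > 0, s > 0. Define D(γ) = (γ+2)²R² − 4(γ+1)(1+s)(R²+sV) and γ_min = 2s + 2(s(1+s)V/R² + √(s(1+s)(1+sV/R²)(1+(1+s)V/R²))). Then D(γ_min) = 0, and for every γ > 0 one has D(γ) ≥ 0 if and only if γ ≥ γ_min. -/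
/-- For `R > 0`, `V > 0`, `s > 0`, with
`D(γ) = (γ+2)²R² − 4(γ+1)(1+s)(R²+sV)` and
`γ_min = 2s + 2(s(1+s)V/R² + √(s(1+s)(1+sV/R²)(1+(1+s)V/R²)))`,
one has `D(γ_min) = 0` and, for every `γ > 0`, `D(γ) ≥ 0` iff `γ ≥ γ_min`. -/
theorem discriminant_nonneg_iff_gamma_ge_gammaMin (R V s : ℝ)
    (hR : 0 < R) (hV : 0 < V) (hs : 0 < s)
    (D : ℝ → ℝ) (hD : ∀ γ, D γ = (γ + 2) ^ 2 * R ^ 2 - 4 * (γ + 1) * (1 + s) * (R ^ 2 + s * V))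
    (γmin : ℝ)
    (hγmin : γmin = 2 * s + 2 * (s * (1 + s) * V / R ^ 2 +
      Real.sqrt (s * (1 + s) * (1 + s * V / R ^ 2) * (1 + (1 + s) * V / R ^ 2)))) :
    D γmin = 0 ∧ ∀ γ > (0 : ℝ), (0 ≤ D γ ↔ γmin ≤ γ) := by
  have hR2 : (0 : ℝ) < R ^ 2 := by positivity
  set a : ℝ := s + s * (1 + s) * V / R ^ 2 with ha
  have ha0 : 0 < a := by positivity
  have hu : s * (1 + s) * (1 + s * V / R ^ 2) * (1 + (1 + s) * V / R ^ 2) = a * (a + 1) := by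
    rw [ha]; field_simp; ring
  set t : ℝ := Real.sqrt (s * (1 + s) * (1 + s * V / R ^ 2) * (1 + (1 + s) * V / R ^ 2)) with htdef
  have ht0 : 0 ≤ t := Real.sqrt_nonneg _
  have ht2 : t ^ 2 = a * (a + 1) := by
    rw [htdef, Real.sq_sqrt (by positivity), hu]
  have hta : a < t := by nlinarith
  have hg : γmin = 2 * a + 2 * t := by rw [hγmin, ha]; ring
  have hDγ : ∀ γ, D γ = R ^ 2 * (γ ^ 2 - 4 * a * γ - 4 * a) := by
    intro γ
    rw [hD, ha]
    field_simp
    ring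
  constructor
  · rw [hDγ, hg]; nlinarith [ht2]
  · intro γ hγ
    rw [hDγ, hg]
    constructor
    · intro h
      by_contra hc
      push_neg at hc
      have h1 : 0 < 2 * a + 2 * t - γ := by linarith
      have h2 : 0 < γ - 2 * a + 2 * t := by linarith
      have h3 : 0 ≤ γ ^ 2 - 4 * a * γ - 4 * a := by
        by_contra h4
        push_neg at h4
        nlinarith [mul_neg_of_pos_of_neg hR2 h4]
      nlinarith [mul_pos h1 h2]
    · intro h
      have h1 : 0 ≤ γ - 2 * a - 2 * t := by linarith
      have h2 : 0 ≤ γ - 2 * a + 2 * t := by linarith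
      have := mul_nonneg h1 h2
      have h3 : 0 ≤ γ ^ 2 - 4 * a * γ - 4 * a := by nlinarith
      positivity
end

section
/- Fix k ≥ 2, a real symmetric positive definite k×k matrix Σ and μ ∈ ℝ^k, and suppose s > 0, R_GMV > 0, γ > 0 and γ ≥ γ_min. Let X = X(γ), Y = Y(γ), and define ω* = Σ⁻¹[ (−𝟏 + (γ+1)μ/X)·(Y/γ) − X·μ ]. Then ω* = ω_GMV + ((X − R_GMV)/s)·Qμ, where ω_GMV = Σ⁻¹𝟏/(𝟏ᵀΣ⁻¹𝟏). In particular, the optimal power-utility portfolio lies on the set of feasible mean-variance portfolios. -/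
/-!
Since `Qμ = Σ⁻¹μ - R Σ⁻¹𝟏`, both sides are combinations of `Σ⁻¹𝟏` and `Σ⁻¹μ`. The
`Σ⁻¹𝟏`-coefficients agree by the definition of `Y`. The `Σ⁻¹μ`-coefficients agree exactly when
`X` is a root of `(1 + s) X² - (γ + 2) R X + (γ + 1) (R² + s V)`, whose discriminant is `D(γ)`. Seen as a
quadratic in `γ`, `D(γ)` has `γ_min` as its larger root, so `D(γ) ≥ 0` for `γ ≥ γ_min`. Hence
`X(γ)` really is the smaller root of that quadratic, and it is positive because all the
coefficients have the right signs.
-/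

open Matrix

theorem sub_smul_vecMulVec_mulVec {n α : Type*} [Fintype n] [CommRing α] (M : Matrix n n α)
    (c : α) (u v : n → α) :
    (M - c • vecMulVec (M *ᵥ u) (u ᵥ* M)) *ᵥ v = M *ᵥ v - (c * (u ⬝ᵥ M *ᵥ v)) • (M *ᵥ u) := by
  rw [sub_mulVec, smul_mulVec, vecMulVec_mulVec, op_smul_eq_smul, ← dotProduct_mulVec, smul_smul]

theorem quadratic_eq_zero_of_eq_neg_sub_sqrt_discrim {a b c x : ℝ} (ha : a ≠ 0)
    (hd : 0 ≤ discrim a b c) (hx : x = (-b - √(discrim a b c)) / (2 * a)) :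
    a * (x * x) + b * x + c = 0 :=
  (quadratic_eq_zero_iff ha (Real.mul_self_sqrt hd).symm x).2 (Or.inr hx)

theorem neg_sub_sqrt_discrim_div_pos {a b c : ℝ} (ha : 0 < a) (hb : b < 0) (hc : 0 < c) :
    0 < (-b - √(discrim a b c)) / (2 * a) := by
  have : √(discrim a b c) < -b :=
    (Real.sqrt_lt' (by linarith)).2 (by rw [discrim]; nlinarith [mul_pos ha hc])
  apply div_pos <;> linarith

theorem discrim_nonneg_of_gammaMin_le {s R V γ : ℝ} (hs : 0 ≤ s) (hR : R ≠ 0) (hV : 0 ≤ V)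
    (hγ : 2 * s + 2 * (s * (1 + s) * V / R ^ 2 +
      √(s * (1 + s) * (1 + s * V / R ^ 2) * (1 + (1 + s) * V / R ^ 2))) ≤ γ) :
    0 ≤ discrim (1 + s) (-((γ + 2) * R)) ((γ + 1) * (R ^ 2 + s * V)) := by
  set q := √(s * (1 + s) * (1 + s * V / R ^ 2) * (1 + (1 + s) * V / R ^ 2))
  have hq : R ^ 4 * q ^ 2 = s * (1 + s) * (R ^ 2 + s * V) * (R ^ 2 + (1 + s) * V) := by
    rw [Real.sq_sqrt (by positivity)]
    field_simp
  have hfactor : discrim (1 + s) (-((γ + 2) * R)) ((γ + 1) * (R ^ 2 + s * V)) =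
      R ^ 2 * (γ - (2 * s + 2 * (s * (1 + s) * V / R ^ 2 + q))) *
        (γ - (2 * s + 2 * (s * (1 + s) * V / R ^ 2 - q))) := by
    rw [discrim]
    field_simp
    linear_combination 4 * hq
  have hq_nonneg : 0 ≤ q := Real.sqrt_nonneg _
  rw [hfactor]
  exact mul_nonneg (mul_nonneg (sq_nonneg R) (by linarith)) (by linarith)

theorem power_utility_portfolio_on_feasible_parabola_general
    {k : ℕ}
    (S : Matrix (Fin k) (Fin k) ℝ) (hS : S.PosDef) (μ : Fin k → ℝ)
    (one : Fin k → ℝ)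
    (R V : ℝ)
    (hR : R = (one ⬝ᵥ (S⁻¹ *ᵥ μ)) / (one ⬝ᵥ (S⁻¹ *ᵥ one)))
    (hV : V = (one ⬝ᵥ (S⁻¹ *ᵥ one))⁻¹)
    (Q : Matrix (Fin k) (Fin k) ℝ)
    (hQ : Q = S⁻¹ - (one ⬝ᵥ (S⁻¹ *ᵥ one))⁻¹ • vecMulVec (S⁻¹ *ᵥ one) (one ᵥ* S⁻¹))
    (s : ℝ)
    (hspos : 0 < s) (hRpos : 0 < R)
    (γ γmin : ℝ) (hγ : 0 < γ)
    (hγmin : γmin = 2 * s + 2 * (s * (1 + s) * V / R ^ 2 +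
      Real.sqrt (s * (1 + s) * (1 + s * V / R ^ 2) * (1 + (1 + s) * V / R ^ 2))))
    (hγγ : γmin ≤ γ)
    (D X Y : ℝ)
    (hD : D = (γ + 2) ^ 2 * R ^ 2 - 4 * (γ + 1) * (1 + s) * (R ^ 2 + s * V))
    (hX : X = ((γ + 2) * R - Real.sqrt D) / (2 * (1 + s)))
    (hY : Y = (γ / s) * (X * R - R ^ 2 - s * V))
    (ω ωGMV : Fin k → ℝ)
    (hω : ω = S⁻¹ *ᵥ ((Y / γ) • (-one + ((γ + 1) / X) • μ) - X • μ))
    (hωGMV : ωGMV = (one ⬝ᵥ (S⁻¹ *ᵥ one))⁻¹ • (S⁻¹ *ᵥ one)) :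
    ω = ωGMV + ((X - R) / s) • (Q *ᵥ μ) := by
  have hV_nonneg : 0 ≤ V := by
    rw [hV]
    exact inv_nonneg.2 (by simpa using hS.posSemidef.inv.dotProduct_mulVec_nonneg one)
  have hdiscrim : discrim (1 + s) (-((γ + 2) * R)) ((γ + 1) * (R ^ 2 + s * V)) = D := by
    rw [hD, discrim]
    ring
  have hX_root : X = (-(-((γ + 2) * R)) - √(discrim (1 + s) (-((γ + 2) * R))
      ((γ + 1) * (R ^ 2 + s * V)))) / (2 * (1 + s)) := by
    rw [hdiscrim, hX, neg_neg]
  have hX_pos : 0 < X := hX_root ▸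
    neg_sub_sqrt_discrim_div_pos (by linarith) (neg_neg_of_pos (by positivity)) (by positivity)
  have hquad := quadratic_eq_zero_of_eq_neg_sub_sqrt_discrim (by positivity)
    (discrim_nonneg_of_gammaMin_le hspos.le hRpos.ne' hV_nonneg (hγmin ▸ hγγ)) hX_root
  have hQμ : Q *ᵥ μ = S⁻¹ *ᵥ μ - R • (S⁻¹ *ᵥ one) := by
    rw [hQ, sub_smul_vecMulVec_mulVec, hR, div_eq_inv_mul]
  rw [hω, hωGMV, ← hV, hQμ]
  simp only [mulVec_sub, mulVec_add, mulVec_neg, mulVec_smul]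
  match_scalars
  · rw [hY]
    field_simp
    ring
  · rw [hY]
    field_simp
    linear_combination (-1) * hquad

/-- Under the conditions of the power-utility optimization, the optimal
portfolio `ω* = Σ⁻¹[(−𝟏 + (γ+1)μ/X)·(Y/γ) − X·μ]` can be written in Markowitz form
`ω* = ω_GMV + ((X − R_GMV)/s)·Qμ`, with `ω_GMV = Σ⁻¹𝟏/(𝟏ᵀΣ⁻¹𝟏)`; in particular it
lies on the set of feasible mean-variance portfolios. -/
theorem power_utility_portfolio_on_feasible_parabola
    {k : ℕ} (hk : 2 ≤ k)
    (S : Matrix (Fin k) (Fin k) ℝ) (hS : S.PosDef) (μ : Fin k → ℝ)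
    (one : Fin k → ℝ) (hone : one = fun _ => (1 : ℝ))
    (R V : ℝ)
    (hR : R = (one ⬝ᵥ (S⁻¹ *ᵥ μ)) / (one ⬝ᵥ (S⁻¹ *ᵥ one)))
    (hV : V = (one ⬝ᵥ (S⁻¹ *ᵥ one))⁻¹)
    (Q : Matrix (Fin k) (Fin k) ℝ)
    (hQ : Q = S⁻¹ - (one ⬝ᵥ (S⁻¹ *ᵥ one))⁻¹ • vecMulVec (S⁻¹ *ᵥ one) (one ᵥ* S⁻¹))
    (s : ℝ) (hs : s = μ ⬝ᵥ (Q *ᵥ μ))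
    (hspos : 0 < s) (hRpos : 0 < R)
    (γ γmin : ℝ) (hγ : 0 < γ)
    (hγmin : γmin = 2 * s + 2 * (s * (1 + s) * V / R ^ 2 +
      Real.sqrt (s * (1 + s) * (1 + s * V / R ^ 2) * (1 + (1 + s) * V / R ^ 2))))
    (hγγ : γmin ≤ γ)
    (D X Y : ℝ)
    (hD : D = (γ + 2) ^ 2 * R ^ 2 - 4 * (γ + 1) * (1 + s) * (R ^ 2 + s * V))
    (hX : X = ((γ + 2) * R - Real.sqrt D) / (2 * (1 + s)))
    (hY : Y = (γ / s) * (X * R - R ^ 2 - s * V))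
    (ω ωGMV : Fin k → ℝ)
    (hω : ω = S⁻¹ *ᵥ ((Y / γ) • (-one + ((γ + 1) / X) • μ) - X • μ))
    (hωGMV : ωGMV = (one ⬝ᵥ (S⁻¹ *ᵥ one))⁻¹ • (S⁻¹ *ᵥ one)) :
    ω = ωGMV + ((X - R) / s) • (Q *ᵥ μ) :=
  power_utility_portfolio_on_feasible_parabola_general S hS μ one R V hR hV Q hQ s hspos hRpos γ
    γmin hγ hγmin hγγ D X Y hD hX hY ω ωGMV hω hωGMV
end

section
/- Let R, V, s be real numbers with R ≠ 0, V > 0, s > 0, and let γ ≥ γ_min, where γ_min = 2s + 2(s(1+s)V/R² + √(s(1+s)(1+sV/R²)(1+(1+s)V/R²))). Set D = (γ+2)²R² − 4(γ+1)(1+s)(R²+sV) and X = ((γ+2)R − √D)/(2(1+s)). Then X > R if and only if R > 0. In particular, the optimal power-utility portfolio is mean-variance efficient (its expected return exceeds that of the global minimum variance portfolio) if and only if γ ≥ γ_min and R > 0. -/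
/-- For `R ≠ 0`, `V > 0`, `s > 0` and `γ ≥ γ_min`, with
`D = (γ+2)²R² − 4(γ+1)(1+s)(R²+sV)` and `X = ((γ+2)R − √D)/(2(1+s))`,
one has `X > R` iff `R > 0`; i.e. the optimal power-utility portfolio is
mean-variance efficient iff `γ ≥ γ_min` and `R > 0`. -/
theorem power_utility_mv_efficiency (R V s γ γmin D X : ℝ)
    (hR : R ≠ 0) (hV : 0 < V) (hs : 0 < s)
    (hγmin : γmin = 2 * s + 2 * (s * (1 + s) * V / R ^ 2 +
      Real.sqrt (s * (1 + s) * (1 + s * V / R ^ 2) * (1 + (1 + s) * V / R ^ 2))))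
    (hγ : γmin ≤ γ)
    (hD : D = (γ + 2) ^ 2 * R ^ 2 - 4 * (γ + 1) * (1 + s) * (R ^ 2 + s * V))
    (hX : X = ((γ + 2) * R - Real.sqrt D) / (2 * (1 + s))) :
    R < X ↔ 0 < R := by
  have hR2 : 0 < R ^ 2 := by positivity
  have h1s : 0 < 1 + s := by linarith
  have hsqnn : 0 ≤ Real.sqrt (s * (1 + s) * (1 + s * V / R ^ 2) * (1 + (1 + s) * V / R ^ 2)) :=
    Real.sqrt_nonneg _
  have hterm : 0 < s * (1 + s) * V / R ^ 2 := by positivity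
  have hγ2s : 2 * s < γ := by
    have : 2 * s < γmin := by rw [hγmin]; linarith
    linarith
  have hγ1 : 0 < γ + 1 := by linarith
  have hkey : D < ((γ - 2 * s) * R) ^ 2 := by
    rw [hD]
    nlinarith [mul_pos (mul_pos h1s hs) hR2,
      mul_pos (mul_pos (mul_pos h1s hs) hγ1) hV]
  have hiff : R < X ↔ Real.sqrt D < (γ - 2 * s) * R := by
    rw [hX, lt_div_iff₀ (by positivity)]
    constructor <;> intro h <;> linarith
  rw [hiff]
  constructor
  · intro h
    have h0 : 0 < (γ - 2 * s) * R := lt_of_le_of_lt (Real.sqrt_nonneg D) h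
    nlinarith
  · intro hRpos
    exact (Real.sqrt_lt' (mul_pos (by linarith) hRpos)).mpr hkey
end

section
/- Fix k ≥ 2, a real symmetric positive definite k×k matrix Σ and μ ∈ ℝ^k, and suppose s > 0 and R_GMV > 0. For γ ≥ γ_min let ω*(γ) = Σ⁻¹[ (−𝟏 + (γ+1)μ/X(γ))·(Y(γ)/γ) − X(γ)·μ ]. Then ω*(γ) converges, as γ → ∞, to the Sharpe-ratio portfolio Σ⁻¹μ/(𝟏ᵀΣ⁻¹μ). -/
/-!
`X(γ)` is the smaller root of `(1 + s) x² − (γ + 2) R x + (γ + 1) (R² + s V)`; rationalizing the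
numerator gives `X(γ) → (R² + s V) / R`, which is nonzero because `V > 0`. Hence
`Y(γ) / γ = (X R − R² − s V) / s → 0`, while the quadratic equation turns the coefficient of `μ`
in `ω*(γ)` into `(X − R) / s → V / R = 1 / (𝟏ᵀΣ⁻¹μ)`.
-/

open Matrix Filter Topology

/-- With `c = 1 + s` and `L = R² + s V` this is `X(γ)`. -/
noncomputable def smallerRoot (R c L γ : ℝ) : ℝ :=
  ((γ + 2) * R - √(discrim c (-((γ + 2) * R)) ((γ + 1) * L))) / (2 * c)

lemma tendsto_discrim_div_sq_atTop (R c L : ℝ) :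
    Tendsto (fun γ : ℝ => discrim c (-((γ + 2) * R)) ((γ + 1) * L) / γ ^ 2) atTop
      (𝓝 (R ^ 2)) := by
  have hcont : Continuous fun t : ℝ => (1 + 2 * t) ^ 2 * R ^ 2 - 4 * c * (t + t ^ 2) * L := by
    fun_prop
  have hzero : Tendsto (fun t : ℝ => (1 + 2 * t) ^ 2 * R ^ 2 - 4 * c * (t + t ^ 2) * L) (𝓝 0)
      (𝓝 (R ^ 2)) := by
    simpa using hcont.tendsto 0
  refine (hzero.comp tendsto_inv_atTop_zero).congr' ?_
  filter_upwards [eventually_ne_atTop 0] with γ hγ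
  simp only [Function.comp_def, discrim]
  field_simp

lemma tendsto_sqrt_discrim_div_atTop {R : ℝ} (hR : 0 < R) (c L : ℝ) :
    Tendsto (fun γ : ℝ => √(discrim c (-((γ + 2) * R)) ((γ + 1) * L)) / γ) atTop
      (𝓝 R) := by
  have hlim := (Real.continuous_sqrt.tendsto _).comp (tendsto_discrim_div_sq_atTop R c L)
  rw [Real.sqrt_sq hR.le] at hlim
  refine hlim.congr' ?_
  filter_upwards [eventually_gt_atTop 0] with γ hγ
  rw [Function.comp_apply, Real.sqrt_div' _ (by positivity), Real.sqrt_sq hγ.le]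

lemma eventually_discrim_pos {R : ℝ} (hR : 0 < R) (c L : ℝ) :
    ∀ᶠ γ in atTop, 0 < discrim c (-((γ + 2) * R)) ((γ + 1) * L) := by
  filter_upwards [(tendsto_sqrt_discrim_div_atTop hR c L).eventually (lt_mem_nhds hR),
    eventually_gt_atTop 0] with γ hsqrt hγ
  exact Real.sqrt_pos.mp ((div_pos_iff_of_pos_right hγ).mp hsqrt)

lemma smallerRoot_isRoot {R c L γ : ℝ} (hc : c ≠ 0)
    (hD : 0 ≤ discrim c (-((γ + 2) * R)) ((γ + 1) * L)) :
    c * (smallerRoot R c L γ * smallerRoot R c L γ) + -((γ + 2) * R) * smallerRoot R c L γ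
      + (γ + 1) * L = 0 :=
  (quadratic_eq_zero_iff hc (Real.mul_self_sqrt hD).symm _).2
    (Or.inr (by rw [smallerRoot, neg_neg]))

lemma smallerRoot_eq_div {R c L γ : ℝ} (hR : 0 < R) (hc : c ≠ 0) (hγ : 0 < γ)
    (hD : 0 ≤ discrim c (-((γ + 2) * R)) ((γ + 1) * L)) :
    smallerRoot R c L γ = 2 * (1 + γ⁻¹) * L /
      ((1 + 2 * γ⁻¹) * R + √(discrim c (-((γ + 2) * R)) ((γ + 1) * L)) / γ) := by
  have hpos : 0 < (1 + 2 * γ⁻¹) * R + √(discrim c (-((γ + 2) * R)) ((γ + 1) * L)) / γ := by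
    positivity
  rw [eq_div_iff hpos.ne', smallerRoot]
  have hsq := Real.sq_sqrt hD
  set Δ := discrim c (-((γ + 2) * R)) ((γ + 1) * L) with hΔ
  rw [discrim] at hΔ
  field_simp
  linear_combination -hsq - hΔ

lemma tendsto_smallerRoot_atTop {R c : ℝ} (hR : 0 < R) (hc : c ≠ 0) (L : ℝ) :
    Tendsto (smallerRoot R c L) atTop (𝓝 (L / R)) := by
  have hnum : Tendsto (fun γ : ℝ => 2 * (1 + γ⁻¹) * L) atTop (𝓝 (2 * (1 + 0) * L)) :=
    ((tendsto_const_nhds.add tendsto_inv_atTop_zero).const_mul 2).mul_const L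
  have hden : Tendsto
      (fun γ : ℝ => (1 + 2 * γ⁻¹) * R + √(discrim c (-((γ + 2) * R)) ((γ + 1) * L)) / γ)
      atTop (𝓝 ((1 + 2 * 0) * R + R)) :=
    ((tendsto_const_nhds.add (tendsto_inv_atTop_zero.const_mul 2)).mul_const R).add
      (tendsto_sqrt_discrim_div_atTop hR c L)
  have hlim := hnum.div hden (by linarith)
  rw [show 2 * (1 + 0) * L / ((1 + 2 * 0) * R + R) = L / R by field_simp; ring] at hlim
  refine hlim.congr' ?_
  filter_upwards [eventually_gt_atTop 0, eventually_discrim_pos hR c L] with γ hγ hD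
  exact (smallerRoot_eq_div hR hc hγ hD.le).symm

/-- The coefficient of `Σ⁻¹μ` in `ω*(γ)`. -/
lemma div_mul_sub_eq_of_isRoot {s R V x γ : ℝ} (hs : s ≠ 0) (hx : x ≠ 0) (hγ : γ ≠ 0)
    (hroot : (1 + s) * (x * x) + -((γ + 2) * R) * x + (γ + 1) * (R ^ 2 + s * V) = 0) :
    γ / s * (x * R - R ^ 2 - s * V) / γ * ((γ + 1) / x) - x = (x - R) / s := by
  field_simp
  linear_combination -hroot

lemma tendsto_mulVec_smul_sub_smul {m n α : Type*} [Fintype n] {l : Filter α}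
    (M : Matrix m n ℝ) (u v : n → ℝ) {a b x : α → ℝ} {t : ℝ} (ha : Tendsto a l (𝓝 0))
    (hb : Tendsto (fun γ => a γ * b γ - x γ) l (𝓝 t)) :
    Tendsto (fun γ => M *ᵥ (a γ • (-u + b γ • v) - x γ • v)) l (𝓝 (M *ᵥ (t • v))) := by
  have hvec : Tendsto (fun γ => (-a γ) • u + (a γ * b γ - x γ) • v) l
      (𝓝 ((-0 : ℝ) • u + t • v)) :=
    (ha.neg.smul_const u).add (hb.smul_const v)
  rw [neg_zero, zero_smul, zero_add] at hvec
  refine (((Continuous.matrix_mulVec continuous_const continuous_id).tendsto _).comp hvec).congr ?_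
  intro γ
  simp only [Function.comp_apply, id]
  congr 1
  ext i
  simp only [Pi.add_apply, Pi.sub_apply, Pi.smul_apply, Pi.neg_apply, smul_eq_mul]
  ring

theorem power_utility_portfolio_tendsto_sharpe_general
    {k : ℕ}
    (S : Matrix (Fin k) (Fin k) ℝ) (hS : S.PosDef) (μ : Fin k → ℝ)
    (one : Fin k → ℝ)
    (R V : ℝ)
    (hR : R = (one ⬝ᵥ (S⁻¹ *ᵥ μ)) / (one ⬝ᵥ (S⁻¹ *ᵥ one)))
    (hV : V = (one ⬝ᵥ (S⁻¹ *ᵥ one))⁻¹)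
    (s : ℝ)
    (hspos : 0 < s) (hRpos : 0 < R)
    (D X Y : ℝ → ℝ)
    (hD : ∀ γ, D γ = (γ + 2) ^ 2 * R ^ 2 - 4 * (γ + 1) * (1 + s) * (R ^ 2 + s * V))
    (hX : ∀ γ, X γ = ((γ + 2) * R - Real.sqrt (D γ)) / (2 * (1 + s)))
    (hY : ∀ γ, Y γ = (γ / s) * (X γ * R - R ^ 2 - s * V))
    (ω : ℝ → Fin k → ℝ)
    (hω : ∀ γ, ω γ = S⁻¹ *ᵥ ((Y γ / γ) • (-one + ((γ + 1) / X γ) • μ) - X γ • μ)) :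
    Tendsto ω atTop (nhds ((one ⬝ᵥ (S⁻¹ *ᵥ μ))⁻¹ • (S⁻¹ *ᵥ μ))) := by
  -- otherwise `R = _ / 0 = 0`
  have hA : one ⬝ᵥ (S⁻¹ *ᵥ one) ≠ 0 := fun h => by simp [hR, h] at hRpos
  have hApos : 0 < one ⬝ᵥ (S⁻¹ *ᵥ one) := by
    simpa using hS.inv.dotProduct_mulVec_pos fun h => hA (by simp [h])
  have hL : 0 < R ^ 2 + s * V := by rw [hV]; positivity
  have hXeq : X = smallerRoot R (1 + s) (R ^ 2 + s * V) := funext fun γ => by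
    rw [hX, smallerRoot, hD, discrim]; ring_nf
  have hXlim : Tendsto X atTop (𝓝 ((R ^ 2 + s * V) / R)) :=
    hXeq ▸ tendsto_smallerRoot_atTop hRpos (by positivity) _
  have hYlim : Tendsto (fun γ => Y γ / γ) atTop (𝓝 0) := by
    have hlim := ((hXlim.mul_const R).sub_const (R ^ 2 + s * V)).div_const s
    rw [div_mul_cancel₀ _ hRpos.ne', sub_self, zero_div] at hlim
    refine hlim.congr' ?_
    filter_upwards [eventually_ne_atTop 0] with γ hγ
    rw [hY]; field_simp; ring
  have hcoef : Tendsto (fun γ => Y γ / γ * ((γ + 1) / X γ) - X γ) atTop (𝓝 (V / R)) := by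
    have hlim := (hXlim.sub_const R).div_const s
    rw [show ((R ^ 2 + s * V) / R - R) / s = V / R by field_simp; ring] at hlim
    refine hlim.congr' ?_
    filter_upwards [eventually_ne_atTop 0, hXlim.eventually_ne (by positivity),
      eventually_discrim_pos hRpos (1 + s) (R ^ 2 + s * V)] with γ hγ hXγ hΔ
    have hroot := hXeq ▸ smallerRoot_isRoot (by positivity) hΔ.le
    rw [hY, div_mul_sub_eq_of_isRoot hspos.ne' hXγ hγ hroot]
  rw [funext hω]
  convert tendsto_mulVec_smul_sub_smul S⁻¹ one μ hYlim hcoef using 2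
  rw [mulVec_smul, hV, hR]
  field_simp

/-- As the relative risk aversion `γ` tends to infinity, the optimal
power-utility portfolio `ω*(γ) = Σ⁻¹[(−𝟏 + (γ+1)μ/X(γ))·(Y(γ)/γ) − X(γ)·μ]`
converges to the Sharpe-ratio portfolio `Σ⁻¹μ/(𝟏ᵀΣ⁻¹μ)`. -/
theorem power_utility_portfolio_tendsto_sharpe
    {k : ℕ} (hk : 2 ≤ k)
    (S : Matrix (Fin k) (Fin k) ℝ) (hS : S.PosDef) (μ : Fin k → ℝ)
    (one : Fin k → ℝ) (hone : one = fun _ => (1 : ℝ))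
    (R V : ℝ)
    (hR : R = (one ⬝ᵥ (S⁻¹ *ᵥ μ)) / (one ⬝ᵥ (S⁻¹ *ᵥ one)))
    (hV : V = (one ⬝ᵥ (S⁻¹ *ᵥ one))⁻¹)
    (Q : Matrix (Fin k) (Fin k) ℝ)
    (hQ : Q = S⁻¹ - (one ⬝ᵥ (S⁻¹ *ᵥ one))⁻¹ • vecMulVec (S⁻¹ *ᵥ one) (one ᵥ* S⁻¹))
    (s : ℝ) (hs : s = μ ⬝ᵥ (Q *ᵥ μ))
    (hspos : 0 < s) (hRpos : 0 < R)
    (D X Y : ℝ → ℝ)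
    (hD : ∀ γ, D γ = (γ + 2) ^ 2 * R ^ 2 - 4 * (γ + 1) * (1 + s) * (R ^ 2 + s * V))
    (hX : ∀ γ, X γ = ((γ + 2) * R - Real.sqrt (D γ)) / (2 * (1 + s)))
    (hY : ∀ γ, Y γ = (γ / s) * (X γ * R - R ^ 2 - s * V))
    (ω : ℝ → Fin k → ℝ)
    (hω : ∀ γ, ω γ = S⁻¹ *ᵥ ((Y γ / γ) • (-one + ((γ + 1) / X γ) • μ) - X γ • μ)) :
    Tendsto ω atTop (nhds ((one ⬝ᵥ (S⁻¹ *ᵥ μ))⁻¹ • (S⁻¹ *ᵥ μ))) :=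
  power_utility_portfolio_tendsto_sharpe_general S hS μ one R V hR hV s hspos hRpos D X Y hD hX hY ω
    hω
end

section
/- Let R, V, s be real numbers with R > 0, V > 0, s > 0, and set D(γ) = (γ+2)²R² − 4(γ+1)(1+s)(R²+sV). Then the function γ ↦ (γ+2)R − √(D(γ)) tends to 2(1+s)(R²+sV)/R as γ → ∞. Consequently X(γ) = ((γ+2)R − √(D(γ)))/(2(1+s)) tends to (R²+sV)/R as γ → ∞. -/
/-! Since `√(a²x² + b x + c) = a x + b / (2a) + o(1)` as `x → ∞`, writing
`D(γ) = R²γ² + 4(R² - K)γ + 4(R² - K)` with `K = (1+s)(R²+sV)` gives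
`(γ+2)R - √(D γ) → 2R - 2(R² - K)/R = 2K/R`. -/

open Filter Topology

section SqrtQuadratic

variable {a : ℝ} (b c : ℝ)

theorem tendsto_sqrt_quadratic_div_atTop (ha : 0 < a) :
    Tendsto (fun x => √(a ^ 2 * x ^ 2 + b * x + c) / x) atTop (𝓝 a) := by
  have hlim : Tendsto (fun u : ℝ => √(a ^ 2 + b * u + c * u ^ 2)) (𝓝 0) (𝓝 a) := by
    have hcont : Continuous (fun u : ℝ => √(a ^ 2 + b * u + c * u ^ 2)) := by fun_prop
    simpa [Real.sqrt_sq ha.le] using hcont.tendsto 0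
  refine (hlim.comp tendsto_inv_atTop_zero).congr' ?_
  filter_upwards [eventually_gt_atTop 0] with x hx
  have hquot : a ^ 2 + b * x⁻¹ + c * x⁻¹ ^ 2 = (a ^ 2 * x ^ 2 + b * x + c) / x ^ 2 := by
    field_simp
  rw [Function.comp_apply, hquot, Real.sqrt_div' _ (by positivity), Real.sqrt_sq hx.le]

theorem tendsto_mul_sub_sqrt_quadratic_atTop (ha : 0 < a) :
    Tendsto (fun x => a * x - √(a ^ 2 * x ^ 2 + b * x + c)) atTop (𝓝 (-b / (2 * a))) := by
  have hsqrt := tendsto_sqrt_quadratic_div_atTop b c ha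
  have hnum : Tendsto (fun x : ℝ => -(b + c * x⁻¹)) atTop (𝓝 (-b)) := by
    simpa using ((tendsto_inv_atTop_zero.const_mul c).const_add b).neg
  have hquot := hnum.div ((tendsto_const_nhds (x := a)).add hsqrt) (by positivity)
  rw [← two_mul] at hquot
  -- rationalising: `a x - √Q = -(b + c/x) / (a + √Q / x)` once `Q > 0`
  refine hquot.congr' ?_
  filter_upwards [eventually_gt_atTop 0, hsqrt.eventually (eventually_gt_nhds ha)]
    with x hx hpos
  simp only [Pi.div_apply]
  set r := √(a ^ 2 * x ^ 2 + b * x + c)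
  have hr_pos : 0 < r := (div_pos_iff_of_pos_right hx).mp hpos
  have hr : r ^ 2 = a ^ 2 * x ^ 2 + b * x + c := Real.sq_sqrt (Real.sqrt_pos.mp hr_pos).le
  clear_value r
  field_simp
  linear_combination hr

end SqrtQuadratic

theorem power_utility_mean_limit_general (R V s : ℝ) (hR : 0 < R) (hs : 0 < s)
    (D : ℝ → ℝ)
    (hD : ∀ γ, D γ = (γ + 2) ^ 2 * R ^ 2 - 4 * (γ + 1) * (1 + s) * (R ^ 2 + s * V)) :
    Tendsto (fun γ => (γ + 2) * R - Real.sqrt (D γ)) atTop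
        (nhds (2 * (1 + s) * (R ^ 2 + s * V) / R)) ∧
      Tendsto (fun γ => ((γ + 2) * R - Real.sqrt (D γ)) / (2 * (1 + s))) atTop
        (nhds ((R ^ 2 + s * V) / R)) := by
  set K := (1 + s) * (R ^ 2 + s * V)
  have hD_quadratic : D = fun γ => R ^ 2 * γ ^ 2 + 4 * (R ^ 2 - K) * γ + 4 * (R ^ 2 - K) := by
    ext γ
    rw [hD]
    ring
  have hlim : Tendsto (fun γ => (γ + 2) * R - √(D γ)) atTop (𝓝 (2 * K / R)) := by
    have h := (tendsto_mul_sub_sqrt_quadratic_atTop (4 * (R ^ 2 - K)) (4 * (R ^ 2 - K)) hR).const_add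
      (2 * R)
    convert h using 2 with γ
    · rw [hD_quadratic]
      ring
    · field_simp
      ring
  refine ⟨by simpa only [K, mul_assoc] using hlim, ?_⟩
  convert hlim.div_const (2 * (1 + s)) using 2
  field_simp
  exact mul_comm _ _

/-- For `R > 0`, `V > 0`, `s > 0` and
`D(γ) = (γ+2)²R² − 4(γ+1)(1+s)(R²+sV)`, the function `γ ↦ (γ+2)R − √(D(γ))`
tends to `2(1+s)(R²+sV)/R` as `γ → ∞`; consequently
`X(γ) = ((γ+2)R − √(D(γ)))/(2(1+s))` tends to `(R²+sV)/R`. -/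
theorem power_utility_mean_limit (R V s : ℝ) (hR : 0 < R) (hV : 0 < V) (hs : 0 < s)
    (D : ℝ → ℝ)
    (hD : ∀ γ, D γ = (γ + 2) ^ 2 * R ^ 2 - 4 * (γ + 1) * (1 + s) * (R ^ 2 + s * V)) :
    Tendsto (fun γ => (γ + 2) * R - Real.sqrt (D γ)) atTop
        (nhds (2 * (1 + s) * (R ^ 2 + s * V) / R)) ∧
      Tendsto (fun γ => ((γ + 2) * R - Real.sqrt (D γ)) / (2 * (1 + s))) atTop
        (nhds ((R ^ 2 + s * V) / R)) :=
  power_utility_mean_limit_general R V s hR hs D hD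
end

section
/- Let R, V, s be real numbers with R > 0, V > 0, s > 0, let γ ≥ γ_min with γ_min = 2s + 2(s(1+s)V/R² + √(s(1+s)(1+sV/R²)(1+(1+s)V/R²))), and set D = (γ+2)²R² − 4(γ+1)(1+s)(R²+sV) and X = ((γ+2)R − √D)/(2(1+s)). Then X ≥ (R²+sV)/R. -/
/-- For `R > 0`, `V > 0`, `s > 0`, `γ ≥ γ_min`, with
`D = (γ+2)²R² − 4(γ+1)(1+s)(R²+sV)` and `X = ((γ+2)R − √D)/(2(1+s))`,
the expected return `X` of the optimal power-utility portfolio is at least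
`(R²+sV)/R`, the expected return of the Sharpe-ratio portfolio. -/
theorem power_utility_mean_ge_sharpe_mean (R V s γ γmin D X : ℝ)
    (hR : 0 < R) (hV : 0 < V) (hs : 0 < s)
    (hγmin : γmin = 2 * s + 2 * (s * (1 + s) * V / R ^ 2 +
      Real.sqrt (s * (1 + s) * (1 + s * V / R ^ 2) * (1 + (1 + s) * V / R ^ 2))))
    (hγ : γmin ≤ γ)
    (hD : D = (γ + 2) ^ 2 * R ^ 2 - 4 * (γ + 1) * (1 + s) * (R ^ 2 + s * V))
    (hX : X = ((γ + 2) * R - Real.sqrt D) / (2 * (1 + s))) :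
    (R ^ 2 + s * V) / R ≤ X := by
  have hR2 : (0:ℝ) < R ^ 2 := by positivity
  have h1s : (0:ℝ) < 1 + s := by linarith
  set M : ℝ := (R ^ 2 + s * V) / R with hM
  set A : ℝ := (γ + 2) * R - 2 * (1 + s) * M with hA
  have hsq := Real.sqrt_nonneg (s * (1 + s) * (1 + s * V / R ^ 2) *
      (1 + (1 + s) * V / R ^ 2))
  have hγ' : 2 * s + 2 * (s * (1 + s) * V / R ^ 2) ≤ γ := by
    rw [hγmin] at hγ; linarith
  have hMR : M * R = R ^ 2 + s * V := div_mul_cancel₀ _ hR.ne'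
  have h2 : s * (1 + s) * V / R ^ 2 * R ^ 2 = s * (1 + s) * V :=
    div_mul_cancel₀ _ hR2.ne'
  have hARnn : 0 ≤ A * R := by
    have : A * R = (γ + 2) * R ^ 2 - 2 * (1 + s) * (M * R) := by ring
    rw [this, hMR]
    nlinarith [mul_le_mul_of_nonneg_right hγ' hR2.le]
  have hAnn : 0 ≤ A := nonneg_of_mul_nonneg_right (by linarith [mul_comm A R] : 0 ≤ R * A) hR
  have hDA : D ≤ A ^ 2 := by
    have key : D * R ^ 2 ≤ (A * R) ^ 2 := by
      have hAR : A * R = (γ + 2) * R ^ 2 - 2 * (1 + s) * (R ^ 2 + s * V) := by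
        rw [hA]; nlinarith [hMR]
      rw [hAR, hD]
      have hP : (0:ℝ) < R ^ 2 + s * V := by positivity
      have hQ : (0:ℝ) < s * R ^ 2 + (1 + s) * (s * V) := by positivity
      nlinarith [mul_pos (mul_pos h1s hP) hQ]
    have : D * R ^ 2 ≤ A ^ 2 * R ^ 2 := by nlinarith [key]
    exact le_of_mul_le_mul_right this hR2
  have hsD : Real.sqrt D ≤ A := by
    calc Real.sqrt D ≤ Real.sqrt (A ^ 2) := Real.sqrt_le_sqrt hDA
    _ = A := Real.sqrt_sq hAnn
  rw [hX, le_div_iff₀ (by positivity : (0:ℝ) < 2 * (1 + s))]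
  have : A = (γ + 2) * R - 2 * (1 + s) * M := rfl
  nlinarith [hsD]
end

section
/- Let R, V, s be real numbers with R ≠ 0, V > 0, s > 0, and suppose D = 9R² − 8(1+s)(R²+sV) ≥ 0 (equivalently γ_min ≤ 1, where γ_min = 2s + 2(s(1+s)V/R² + √(s(1+s)(1+sV/R²)(1+(1+s)V/R²)))). Set X = (3R − √D)/(2(1+s)). Then X > R if and only if R > 0. In particular, the optimal logarithmic-utility portfolio is mean-variance efficient if and only if γ_min ≤ 1 and R > 0. -/
/-- For `R ≠ 0`, `V > 0`, `s > 0` with `D = 9R² − 8(1+s)(R²+sV) ≥ 0`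
(equivalently `γ_min ≤ 1`), and `X = (3R − √D)/(2(1+s))`, one has `X > R` iff
`R > 0`; i.e. the optimal logarithmic-utility portfolio is mean-variance
efficient iff `γ_min ≤ 1` and `R > 0`. -/
theorem log_utility_mv_efficiency (R V s D X : ℝ)
    (hR : R ≠ 0) (hV : 0 < V) (hs : 0 < s)
    (hD : D = 9 * R ^ 2 - 8 * (1 + s) * (R ^ 2 + s * V))
    (hDnonneg : 0 ≤ D)
    (hX : X = (3 * R - Real.sqrt D) / (2 * (1 + s))) :
    R < X ↔ 0 < R := by
  have hs8 : s < 1 / 8 := by nlinarith [sq_nonneg R, mul_pos hs hV]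
  have hc : (0:ℝ) < 2 * (1 + s) := by linarith
  have key : (Real.sqrt D) ^ 2 < ((1 - 2 * s) * R) ^ 2 := by
    rw [Real.sq_sqrt hDnonneg]
    nlinarith [mul_pos hs (sq_pos_of_ne_zero hR), mul_pos hs hV, mul_pos (mul_pos hs hs) hV, mul_pos (mul_pos hs hs) (sq_pos_of_ne_zero hR)]
  have h1 : R < X ↔ Real.sqrt D < (1 - 2 * s) * R := by
    rw [hX, lt_div_iff₀ hc]; constructor <;> intro h <;> nlinarith
  rw [h1]
  constructor
  · intro h
    have h0 : 0 < (1 - 2 * s) * R := lt_of_le_of_lt (Real.sqrt_nonneg D) h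
    nlinarith
  · intro h
    have h0 : 0 < (1 - 2 * s) * R := by nlinarith
    rw [show ((1-2*s)*R) = Real.sqrt (((1-2*s)*R)^2) by
      rw [Real.sqrt_sq h0.le]]
    exact Real.sqrt_lt_sqrt hDnonneg (by rwa [Real.sq_sqrt hDnonneg] at key)
end

section
/- Let R, V, s be real numbers with R > 0, V > 0, s > 0, let γ > γ_min where γ_min = 2s + 2(s(1+s)V/R² + √(s(1+s)(1+sV/R²)(1+(1+s)V/R²))), and set D = (γ+2)²R² − 4(γ+1)(1+s)(R²+sV), X_± = ((γ+2)R ± √D)/(2(1+s)) and Y_± = (γ/s)(X_±·R − R² − sV). Then X_− > 0, Y_− > 0 and −((γ+1)/γ)·ln(X_+/X_−) + (1/2)·ln(Y_+/Y_−) > 0. -/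
set_option maxHeartbeats 1000000

private lemma pos_factor {a b : ℝ} (ha : 0 < a) (h : 0 < a * b) : 0 < b := by
  by_contra hc
  push_neg at hc
  nlinarith [mul_nonneg ha.le (neg_nonneg.mpr hc)]

private lemma quad_pos (s R V X : ℝ) (hs : 0 < s) (hR : 0 < R) (hV : 0 < V) :
    0 < (1 + s) * X ^ 2 - 2 * R * X + (R ^ 2 + s * V) := by
  nlinarith [sq_nonneg ((1 + s) * X - R), mul_pos hs hV, mul_pos (mul_pos hs hs) hV,
    mul_pos hs (mul_pos hR hR)]

private lemma key_ineq (m x : ℝ) (hm : 1 < m) (hx : 1 < x) (hxm : x < m) :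
    (m + 1) * Real.log x < (m - 1) * Real.log ((m * x - 1) / (m - x)) := by
  set f : ℝ → ℝ := fun y => (m - 1) * (Real.log (m * y - 1) - Real.log (m - y))
      - (m + 1) * Real.log y with hf
  have hderiv : ∀ y ∈ Set.Icc (1:ℝ) x,
      HasDerivAt f ((m - 1) * ((m * y - 1)⁻¹ * m - (m - y)⁻¹ * (-1)) - (m + 1) * y⁻¹) y := by
    intro y hy
    obtain ⟨hy1, hy2⟩ := hy
    have h1 : (0:ℝ) < m*y - 1 := by nlinarith
    have h2 : (0:ℝ) < m - y := by linarith
    have h3 : (0:ℝ) < y := by linarith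
    have d1 : HasDerivAt (fun y : ℝ => Real.log (m*y - 1)) ((m*y-1)⁻¹ * m) y := by
      have hinner : HasDerivAt (fun y : ℝ => m*y - 1) m y := by
        simpa using ((hasDerivAt_id y).const_mul m).sub_const 1
      exact (Real.hasDerivAt_log h1.ne').comp y hinner
    have d2 : HasDerivAt (fun y : ℝ => Real.log (m - y)) ((m-y)⁻¹ * (-1)) y := by
      have hinner : HasDerivAt (fun y : ℝ => m - y) (-1) y := by
        simpa using (hasDerivAt_id y).const_sub m
      exact (Real.hasDerivAt_log h2.ne').comp y hinner
    have d3 : HasDerivAt Real.log y⁻¹ y := Real.hasDerivAt_log h3.ne'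
    exact ((d1.sub d2).const_mul (m-1)).sub (d3.const_mul (m+1))
  have hcont : ContinuousOn f (Set.Icc 1 x) := fun y hy =>
    (hderiv y hy).continuousAt.continuousWithinAt
  have hmono : StrictMonoOn f (Set.Icc 1 x) := by
    apply strictMonoOn_of_deriv_pos (convex_Icc 1 x) hcont
    intro y hy
    rw [interior_Icc] at hy
    obtain ⟨hy1, hy2⟩ := hy
    have h1 : (0:ℝ) < m*y - 1 := by nlinarith
    have h2 : (0:ℝ) < m - y := by linarith
    have h3 : (0:ℝ) < y := by linarith
    rw [(hderiv y ⟨hy1.le, hy2.le⟩).deriv]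
    have heq : (m - 1) * ((m * y - 1)⁻¹ * m - (m - y)⁻¹ * (-1)) - (m + 1) * y⁻¹
        = ((m+1)*(m*(y-1)^2))/(y*((m*y-1)*(m-y))) := by
      field_simp
      ring
    rw [heq]
    exact div_pos (mul_pos (by linarith) (mul_pos (by linarith)
        (pow_pos (by linarith : (0:ℝ) < y - 1) 2)))
      (mul_pos h3 (mul_pos h1 h2))
  have h01 : f 1 = 0 := by simp [hf]
  have hfx : f 1 < f x := hmono (Set.left_mem_Icc.mpr hx.le) (Set.right_mem_Icc.mpr hx.le) hx
  rw [h01] at hfx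
  have hfx' : 0 < (m - 1) * (Real.log (m * x - 1) - Real.log (m - x))
      - (m + 1) * Real.log x := hfx
  have hlog : Real.log ((m*x-1)/(m-x)) = Real.log (m*x-1) - Real.log (m-x) :=
    Real.log_div (ne_of_gt (by nlinarith)) (ne_of_gt (by linarith))
  rw [hlog]
  nlinarith [hfx']

/-- For `R > 0`, `V > 0`, `s > 0` and `γ > γ_min`, with
`D = (γ+2)²R² − 4(γ+1)(1+s)(R²+sV)`, `X_± = ((γ+2)R ± √D)/(2(1+s))` and
`Y_± = (γ/s)(X_±R − R² − sV)`, one has `X_− > 0`, `Y_− > 0` and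
`−((γ+1)/γ)·ln(X_+/X_−) + (1/2)·ln(Y_+/Y_−) > 0`. -/
theorem power_utility_minus_root_maximizes (R V s γ γmin D Xp Xm Yp Ym : ℝ)
    (hR : 0 < R) (hV : 0 < V) (hs : 0 < s)
    (hγmin : γmin = 2 * s + 2 * (s * (1 + s) * V / R ^ 2 +
      Real.sqrt (s * (1 + s) * (1 + s * V / R ^ 2) * (1 + (1 + s) * V / R ^ 2))))
    (hγ : γmin < γ)
    (hD : D = (γ + 2) ^ 2 * R ^ 2 - 4 * (γ + 1) * (1 + s) * (R ^ 2 + s * V))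
    (hXp : Xp = ((γ + 2) * R + Real.sqrt D) / (2 * (1 + s)))
    (hXm : Xm = ((γ + 2) * R - Real.sqrt D) / (2 * (1 + s)))
    (hYp : Yp = (γ / s) * (Xp * R - R ^ 2 - s * V))
    (hYm : Ym = (γ / s) * (Xm * R - R ^ 2 - s * V)) :
    0 < Xm ∧ 0 < Ym ∧
      0 < -((γ + 1) / γ) * Real.log (Xp / Xm) + (1 / 2) * Real.log (Yp / Ym) := by
  have hR2 : (0:ℝ) < R ^ 2 := by positivity
  have hs1 : (0:ℝ) < 1 + s := by linarith
  have hKpos : (0:ℝ) < s * (R ^ 2 + (1 + s) * V) :=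
    mul_pos hs (by linarith [mul_pos hs1 hV])
  have hLpos : (0:ℝ) < (1 + s) * (R ^ 2 + s * V) :=
    mul_pos hs1 (by linarith [mul_pos hs hV])
  have hKL : (0:ℝ) ≤ s * (R ^ 2 + (1 + s) * V) * ((1 + s) * (R ^ 2 + s * V)) := by positivity
  have hsqW : Real.sqrt (s * (1 + s) * (1 + s * V / R ^ 2) * (1 + (1 + s) * V / R ^ 2))
      = Real.sqrt (s * (R ^ 2 + (1 + s) * V) * ((1 + s) * (R ^ 2 + s * V))) / R ^ 2 := by
    rw [show s * (1 + s) * (1 + s * V / R ^ 2) * (1 + (1 + s) * V / R ^ 2)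
        = (s * (R ^ 2 + (1 + s) * V) * ((1 + s) * (R ^ 2 + s * V))) / (R ^ 2) ^ 2 by
      field_simp]
    rw [Real.sqrt_div hKL, Real.sqrt_sq hR2.le]
  set q : ℝ := Real.sqrt (s * (R ^ 2 + (1 + s) * V) * ((1 + s) * (R ^ 2 + s * V))) with hq
  have hqnn : 0 ≤ q := Real.sqrt_nonneg _
  have hγminR : γmin * R ^ 2 = 2 * (s * (R ^ 2 + (1 + s) * V)) + 2 * q := by
    rw [hγmin, hsqW]
    field_simp
    ring
  have hγR : 2 * (s * (R ^ 2 + (1 + s) * V)) + 2 * q < γ * R ^ 2 := by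
    calc 2 * (s * (R ^ 2 + (1 + s) * V)) + 2 * q = γmin * R ^ 2 := hγminR.symm
    _ < γ * R ^ 2 := mul_lt_mul_of_pos_right hγ hR2
  have hγpos : 0 < γ := by
    by_contra hc
    push_neg at hc
    linarith [mul_nonneg hR2.le (neg_nonneg.mpr hc), hKpos, hqnn, hγR]
  have hγ1 : (0:ℝ) < γ + 1 := by linarith
  have hγ2 : (0:ℝ) < γ + 2 := by linarith
  -- D > 0
  have hq2 : q ^ 2 = s * (R ^ 2 + (1 + s) * V) * ((1 + s) * (R ^ 2 + s * V)) :=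
    Real.sq_sqrt hKL
  have hid : R ^ 2 * D = (γ * R ^ 2 - 2 * (s * (R ^ 2 + (1 + s) * V))) ^ 2 - 4 * q ^ 2 := by
    rw [hD, hq2]; ring
  have hR2D : 0 < R ^ 2 * D := by
    rw [hid, show (γ * R ^ 2 - 2 * (s * (R ^ 2 + (1 + s) * V))) ^ 2 - 4 * q ^ 2
      = ((γ * R ^ 2 - 2 * (s * (R ^ 2 + (1 + s) * V))) - 2 * q)
        * ((γ * R ^ 2 - 2 * (s * (R ^ 2 + (1 + s) * V))) + 2 * q) from by ring]
    exact mul_pos (by linarith) (by linarith)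
  have hDpos : 0 < D := pos_factor hR2 hR2D
  set t : ℝ := Real.sqrt D with htdef
  have ht2 : t ^ 2 = D := Real.sq_sqrt hDpos.le
  have htpos : 0 < t := Real.sqrt_pos.mpr hDpos
  have hQ2 : t ^ 2 < ((γ + 2) * R) ^ 2 := by
    rw [ht2, hD, show ((γ + 2) * R) ^ 2 = (γ + 2) ^ 2 * R ^ 2 from by ring]
    linarith [mul_pos (mul_pos hγ1 hs1) (by linarith [mul_pos hs hV] : (0:ℝ) < R ^ 2 + s * V)]
  have hQt : t < (γ + 2) * R := lt_of_pow_lt_pow_left₀ 2 (by positivity) hQ2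
  have hXmpos : 0 < Xm := by
    rw [hXm]; exact div_pos (by linarith) (by linarith)
  have hXmXp : Xm < Xp := by
    rw [hXm, hXp]
    exact div_lt_div_of_pos_right (by linarith) (by linarith)
  have hXppos : 0 < Xp := lt_trans hXmpos hXmXp
  -- sum and product of the two roots
  have hsum : (1 + s) * (Xp + Xm) = (γ + 2) * R := by
    rw [hXp, hXm]; field_simp; ring
  have hprod : (1 + s) * (Xp * Xm) = (γ + 1) * (R ^ 2 + s * V) := by
    have hDt : t ^ 2 = (γ + 2) ^ 2 * R ^ 2 - 4 * (γ + 1) * (1 + s) * (R ^ 2 + s * V) := by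
      rw [ht2, hD]
    rw [hXp, hXm, div_mul_div_comm,
      show ((γ + 2) * R + t) * ((γ + 2) * R - t) = (γ + 2) ^ 2 * R ^ 2 - t ^ 2 from by ring,
      hDt]
    field_simp
    ring
  -- quadratic relations satisfied by the roots
  have hqm : (1 + s) * Xm ^ 2 - (γ + 2) * R * Xm + (γ + 1) * (R ^ 2 + s * V) = 0 := by
    linear_combination Xm * hsum - hprod
  have hqp : (1 + s) * Xp ^ 2 - (γ + 2) * R * Xp + (γ + 1) * (R ^ 2 + s * V) = 0 := by
    linear_combination Xp * hsum - hprod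
  -- positivity of Xm*R - R^2 - s*V and Xp*R - R^2 - s*V
  have hγB : γ * (Xm * R - R ^ 2 - s * V)
      = (1 + s) * Xm ^ 2 - 2 * R * Xm + (R ^ 2 + s * V) := by
    linear_combination -hqm
  have hγA : γ * (Xp * R - R ^ 2 - s * V)
      = (1 + s) * Xp ^ 2 - 2 * R * Xp + (R ^ 2 + s * V) := by
    linear_combination -hqp
  have hBpos : 0 < Xm * R - R ^ 2 - s * V :=
    pos_factor hγpos (by rw [hγB]; exact quad_pos s R V Xm hs hR hV)
  have hApos : 0 < Xp * R - R ^ 2 - s * V :=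
    pos_factor hγpos (by rw [hγA]; exact quad_pos s R V Xp hs hR hV)
  have hYmpos : 0 < Ym := by
    rw [hYm]; exact mul_pos (div_pos hγpos hs) hBpos
  have hYppos : 0 < Yp := by
    rw [hYp]; exact mul_pos (div_pos hγpos hs) hApos
  refine ⟨hXmpos, hYmpos, ?_⟩
  -- structural identities
  have hA : (γ + 1) * (γ + 2) * (Xp * R - R ^ 2 - s * V)
      = (1 + s) * (Xp * ((γ + 1) * Xp - Xm)) := by
    linear_combination (γ + 2) * hprod - ((γ + 1) * Xp) * hsum
  have hB : (γ + 1) * (γ + 2) * (Xm * R - R ^ 2 - s * V)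
      = (1 + s) * (Xm * ((γ + 1) * Xm - Xp)) := by
    linear_combination (γ + 2) * hprod - ((γ + 1) * Xm) * hsum
  have hupos : 0 < (γ + 1) * Xp - Xm := by
    apply pos_factor hXppos
    apply pos_factor hs1
    rw [← hA]
    exact mul_pos (mul_pos hγ1 hγ2) hApos
  have hwpos : 0 < (γ + 1) * Xm - Xp := by
    apply pos_factor hXmpos
    apply pos_factor hs1
    rw [← hB]
    exact mul_pos (mul_pos hγ1 hγ2) hBpos
  -- ratio identity for Y
  have hABxw : ((γ + 1) * (γ + 2)) *
      ((Xp * R - R ^ 2 - s * V) * (Xm * ((γ + 1) * Xm - Xp)))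
      = ((γ + 1) * (γ + 2)) *
      ((Xm * R - R ^ 2 - s * V) * (Xp * ((γ + 1) * Xp - Xm))) := by
    linear_combination (Xm * ((γ + 1) * Xm - Xp)) * hA - (Xp * ((γ + 1) * Xp - Xm)) * hB
  have hABxw' : (Xp * R - R ^ 2 - s * V) * (Xm * ((γ + 1) * Xm - Xp))
      = (Xm * R - R ^ 2 - s * V) * (Xp * ((γ + 1) * Xp - Xm)) :=
    mul_left_cancel₀ (by positivity) hABxw
  have hYY : Yp * (Xm * ((γ + 1) * Xm - Xp)) = Ym * (Xp * ((γ + 1) * Xp - Xm)) := by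
    rw [hYp, hYm]
    linear_combination (γ / s) * hABxw'
  have hYrat : Yp / Ym = (Xp * ((γ + 1) * Xp - Xm)) / (Xm * ((γ + 1) * Xm - Xp)) := by
    rw [div_eq_div_iff hYmpos.ne' (by positivity)]
    linear_combination hYY
  -- key inequality with m = γ+1, x = Xp/Xm
  have hx1 : 1 < Xp / Xm := (one_lt_div hXmpos).mpr hXmXp
  have hxm : Xp / Xm < γ + 1 := by
    rw [div_lt_iff₀ hXmpos]
    linarith [hwpos]
  have hkey := key_ineq (γ + 1) (Xp / Xm) (by linarith) hx1 hxm
  have hmx : (0:ℝ) < (γ + 1) - Xp / Xm := sub_pos.mpr hxm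
  have hmx1 : (0:ℝ) < (γ + 1) * (Xp / Xm) - 1 := by
    rw [sub_pos]
    calc (1:ℝ) < Xp / Xm := hx1
    _ ≤ (γ + 1) * (Xp / Xm) :=
      le_mul_of_one_le_left (le_of_lt (div_pos hXppos hXmpos)) (by linarith)
  have hq1 : ((γ + 1) * (Xp / Xm) - 1) / ((γ + 1) - Xp / Xm)
      = ((γ + 1) * Xp - Xm) / ((γ + 1) * Xm - Xp) := by
    rw [div_eq_div_iff hmx.ne' hwpos.ne']
    field_simp
  rw [hq1] at hkey
  -- split the log of Yp/Ym
  have hsplit : Real.log (Yp / Ym)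
      = Real.log (Xp / Xm) + Real.log (((γ + 1) * Xp - Xm) / ((γ + 1) * Xm - Xp)) := by
    rw [hYrat, show (Xp * ((γ + 1) * Xp - Xm)) / (Xm * ((γ + 1) * Xm - Xp))
        = (Xp / Xm) * (((γ + 1) * Xp - Xm) / ((γ + 1) * Xm - Xp)) from
      (div_mul_div_comm Xp Xm ((γ + 1) * Xp - Xm) ((γ + 1) * Xm - Xp)).symm]
    exact Real.log_mul (ne_of_gt (div_pos hXppos hXmpos))
      (ne_of_gt (div_pos hupos hwpos))
  set Lx : ℝ := Real.log (Xp / Xm) with hLx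
  set Lq : ℝ := Real.log (((γ + 1) * Xp - Xm) / ((γ + 1) * Xm - Xp)) with hLq
  have e1 : (γ + 1 + 1) * Lx = (γ + 2) * Lx := by ring
  have e2 : (γ + 1 - 1) * Lq = γ * Lq := by ring
  rw [e1, e2] at hkey
  have hfin : -((γ + 1) / γ) * Lx + (1 / 2) * Real.log (Yp / Ym)
      = (γ * Lq - (γ + 2) * Lx) / (2 * γ) := by
    rw [hsplit]
    field_simp
    ring
  rw [hfin]
  exact div_pos (by linarith) (by linarith)
end

section
/- Let R, V, s be real numbers with R > 0, V > 0, s > 0, define γ_min = 2s + 2(s(1+s)V/R² + √(s(1+s)(1+sV/R²)(1+(1+s)V/R²))), D(γ) = (γ+2)²R² − 4(γ+1)(1+s)(R²+sV), and X_±(γ) = ((γ+2)R ± √(D(γ)))/(2(1+s)). Then for every γ > γ_min, the function γ ↦ X_+(γ)/X_−(γ) is differentiable at γ with derivative (γ/(γ+1))·(R/√(D(γ)))·(X_+(γ)/X_−(γ)). -/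
/-!
Viewed as a quadratic in `γ`, `D` has leading coefficient `R²` and larger root `γ_min`, so
`D(γ) > 0` beyond it; moreover `((γ+2)R)² − D(γ) = 4(γ+1)(1+s)(R²+sV) > 0`, so `√D(γ) < (γ+2)R`.
The factor `2(1+s)` cancels in `X₊/X₋ = (a + √D)/(a − √D)` with `a = (γ+2)R`, and the quotient
rule gives the derivative `2(a·(√D)' − a'·√D)/(a − √D)²`, which reduces to the claimed one
using `(√D)² = D`.
-/

open Real

theorem quadratic_pos_of_larger_root_lt {a b c x : ℝ} (ha : 0 < a)
    (hx : (-b + √(discrim a b c)) / (2 * a) < x) : 0 < a * (x * x) + b * x + c := by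
  have hlin : √(discrim a b c) < 2 * a * x + b := by
    rw [div_lt_iff₀ (by positivity)] at hx; linarith
  have hsq : discrim a b c < (2 * a * x + b) ^ 2 :=
    (sqrt_lt' ((sqrt_nonneg _).trans_lt hlin)).mp hlin
  have hcomplete : 4 * a * (a * (x * x) + b * x + c) = (2 * a * x + b) ^ 2 - discrim a b c := by
    rw [discrim]; ring
  have hpos : 0 < 4 * a * (a * (x * x) + b * x + c) := by rw [hcomplete]; linarith
  exact pos_of_mul_pos_right hpos (by positivity)

theorem HasDerivAt.add_div_sub {𝕜 : Type*} [NontriviallyNormedField 𝕜] {f g : 𝕜 → 𝕜}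
    {f' g' x : 𝕜} (hf : HasDerivAt f f' x) (hg : HasDerivAt g g' x) (h : f x - g x ≠ 0) :
    HasDerivAt (fun y => (f y + g y) / (f y - g y))
      (2 * (f x * g' - f' * g x) / (f x - g x) ^ 2) x :=
  ((hf.add hg).div (hf.sub hg) h).congr_deriv (by simp only [Pi.add_apply, Pi.sub_apply]; ring)

theorem discr_pos_of_gammaMin_lt {R V s γ : ℝ} (hR : 0 < R)
    (hγ : 2 * s + 2 * (s * (1 + s) * V / R ^ 2 +
      √(s * (1 + s) * (1 + s * V / R ^ 2) * (1 + (1 + s) * V / R ^ 2))) < γ) :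
    0 < (γ + 2) ^ 2 * R ^ 2 - 4 * (γ + 1) * (1 + s) * (R ^ 2 + s * V) := by
  set c := (1 + s) * (R ^ 2 + s * V)
  have hdiscrim : discrim (R ^ 2) (4 * (R ^ 2 - c)) (4 * (R ^ 2 - c)) =
      (4 * R ^ 2) ^ 2 * (s * (1 + s) * (1 + s * V / R ^ 2) * (1 + (1 + s) * V / R ^ 2)) := by
    rw [discrim]; field_simp; ring
  have hroot : (-(4 * (R ^ 2 - c)) + √(discrim (R ^ 2) (4 * (R ^ 2 - c)) (4 * (R ^ 2 - c))))
      / (2 * R ^ 2) < γ := by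
    rw [hdiscrim, sqrt_mul (by positivity), sqrt_sq (by positivity)]
    convert hγ using 1
    field_simp; ring
  convert quadratic_pos_of_larger_root_lt (by positivity) hroot using 1
  ring

/-- For `R > 0`, `V > 0`, `s > 0`, with
`D(γ) = (γ+2)²R² − 4(γ+1)(1+s)(R²+sV)` and `X_±(γ) = ((γ+2)R ± √(D(γ)))/(2(1+s))`,
at every `γ > γ_min` the ratio `X_+/X_−` is differentiable with derivative
`(γ/(γ+1))·(R/√(D(γ)))·(X_+(γ)/X_−(γ))`. -/
theorem deriv_ratio_Xplus_Xminus (R V s γmin : ℝ)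
    (hR : 0 < R) (hV : 0 < V) (hs : 0 < s)
    (hγmin : γmin = 2 * s + 2 * (s * (1 + s) * V / R ^ 2 +
      Real.sqrt (s * (1 + s) * (1 + s * V / R ^ 2) * (1 + (1 + s) * V / R ^ 2))))
    (D Xp Xm : ℝ → ℝ)
    (hD : ∀ γ, D γ = (γ + 2) ^ 2 * R ^ 2 - 4 * (γ + 1) * (1 + s) * (R ^ 2 + s * V))
    (hXp : ∀ γ, Xp γ = ((γ + 2) * R + Real.sqrt (D γ)) / (2 * (1 + s)))
    (hXm : ∀ γ, Xm γ = ((γ + 2) * R - Real.sqrt (D γ)) / (2 * (1 + s))) :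
    ∀ γ > γmin,
      HasDerivAt (fun g => Xp g / Xm g)
        ((γ / (γ + 1)) * (R / Real.sqrt (D γ)) * (Xp γ / Xm γ)) γ := by
  intro γ hγ
  have hγ0 : 0 < γ := lt_of_le_of_lt (by rw [hγmin]; positivity) hγ
  have hDpos : 0 < D γ := hD γ ▸ discr_pos_of_gammaMin_lt hR (hγmin ▸ hγ)
  have hsqrt_lt : √(D γ) < (γ + 2) * R := by
    rw [sqrt_lt' (by positivity), hD]
    nlinarith [mul_pos (mul_pos (by linarith : 0 < γ + 1) (by linarith : 0 < 1 + s))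
      (by positivity : 0 < R ^ 2 + s * V)]
  have hab : (γ + 2) * R - √(D γ) ≠ 0 := sub_ne_zero.mpr hsqrt_lt.ne'
  have hratio (g : ℝ) : Xp g / Xm g = ((g + 2) * R + √(D g)) / ((g + 2) * R - √(D g)) := by
    rw [hXp, hXm, div_div_div_cancel_right₀ (by positivity)]
  have hderivD : HasDerivAt D (2 * (γ + 2) * R ^ 2 - 4 * (1 + s) * (R ^ 2 + s * V)) γ := by
    rw [funext hD]
    exact (((((hasDerivAt_id' γ).add_const 2).pow 2).mul_const (R ^ 2)).sub
      (((((hasDerivAt_id' γ).add_const 1).const_mul 4).mul_const (1 + s)).mul_const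
        (R ^ 2 + s * V))).congr_deriv (by ring)
  simp only [hratio]
  refine ((((hasDerivAt_id' γ).add_const 2).mul_const R).add_div_sub
    (hderivD.sqrt hDpos.ne') hab).congr_deriv ?_
  have hb : √(D γ) ^ 2 = _ := (sq_sqrt hDpos.le).trans (hD γ)
  have hb0 : √(D γ) ≠ 0 := (sqrt_pos.mpr hDpos).ne'
  generalize √(D γ) = b at hb hb0 hab ⊢
  field_simp
  linear_combination (-(γ + 2)) * hb
end
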